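/- arXiv:2603.08986 — 2 statements merged into one kernel-verified Lean document; each statement's English description precedes it below -/
import Mathlib

section
/- Let g be a finite-dimensional basic Z₂×Z₂-graded Lie algebra with nondegenerate Killing form K, let {Z_i} be a homogeneous basis orthonormal with respect to K, and let Ω = Σ_i Z_i² in the universal enveloping algebra U(g). Then Ω is central in U(g): [X,Ω] = XΩ − ΩX = 0 for all X ∈ g. -/
abbrev Z22 : Type := ZMod 2 × ZMod 2

/-- The commutation factor `ε((a₁,a₂),(b₁,b₂)) = a₁b₂ - a₂b₁ ∈ ℤ/2`. -/
def eps (a b : Z22) : ZMod 2 := a.1 * b.2 - a.2 * b.1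

/-- The sign `(-1)^{ε(a,b)}` as a complex number. -/
noncomputable def sgn (a b : Z22) : ℂ := if eps a b = 0 then 1 else -1

/-- A `ℤ₂×ℤ₂`-graded (color) complex Lie algebra structure on a module `L`. -/
structure ColorLie (L : Type) [AddCommGroup L] [Module ℂ L] : Type where
  bracket : L →ₗ[ℂ] L →ₗ[ℂ] L
  grade : Z22 → Submodule ℂ L
  direct : DirectSum.IsInternal grade
  bracket_grade : ∀ a b : Z22, ∀ x ∈ grade a, ∀ y ∈ grade b,
    bracket x y ∈ grade (a + b)
  antisymm : ∀ a b : Z22, ∀ x ∈ grade a, ∀ y ∈ grade b,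
    bracket x y = -(sgn a b) • bracket y x
  jacobi : ∀ a b : Z22, ∀ x ∈ grade a, ∀ y ∈ grade b, ∀ z : L,
    bracket x (bracket y z) =
      bracket (bracket x y) z + sgn a b • bracket y (bracket x z)

variable {L : Type} [AddCommGroup L] [Module ℂ L]

/-- The Killing form `K(x,y) = tr(ad x ∘ ad y)`. -/
noncomputable def killing (C : ColorLie L) (x y : L) : ℂ :=
  LinearMap.trace ℂ L (C.bracket x ∘ₗ C.bracket y)

/-- The adjoint action viewed as an endomorphism. -/
def adE (C : ColorLie L) (x : L) : Module.End ℂ L := C.bracket x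

/-- A `ℤ₂×ℤ₂`-graded ideal. -/
def IsGradedIdeal (C : ColorLie L) (I : Submodule ℂ L) : Prop :=
  (∀ x : L, ∀ y ∈ I, C.bracket x y ∈ I) ∧ I = ⨆ a : Z22, (I ⊓ C.grade a)

/-- Simplicity: no nontrivial proper graded ideal. -/
def ColorLie.IsSimple (C : ColorLie L) : Prop :=
  C.bracket ≠ 0 ∧ ∀ I : Submodule ℂ L, IsGradedIdeal C I → I = ⊥ ∨ I = ⊤

/-- An ideal of the Lie algebra `g^{(0,0)}`. -/
def IsIdeal0 (C : ColorLie L) (I : Submodule ℂ L) : Prop :=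
  I ≤ C.grade (0, 0) ∧ ∀ x ∈ C.grade (0, 0), ∀ y ∈ I, C.bracket x y ∈ I

/-- `g^{(0,0)}` is reductive: every ideal admits a complementary ideal
(a standard characterization of reductivity in characteristic zero). -/
def IsReductive0 (C : ColorLie L) : Prop :=
  ∀ I : Submodule ℂ L, IsIdeal0 C I →
    ∃ J : Submodule ℂ L, IsIdeal0 C J ∧ I ⊓ J = ⊥ ∧ I ⊔ J = C.grade (0, 0)

/-- Nondegeneracy of the Killing form. -/
def IsKillingNondeg (C : ColorLie L) : Prop :=
  ∀ x : L, (∀ y : L, killing C x y = 0) → x = 0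

/-- A Cartan subalgebra of `g^{(0,0)}`: a nilpotent self-normalizing subalgebra
(nilpotency via Engel's criterion). -/
structure IsCartan (C : ColorLie L) (t : Submodule ℂ L) : Prop where
  le : t ≤ C.grade (0, 0)
  bracket_mem : ∀ x ∈ t, ∀ y ∈ t, C.bracket x y ∈ t
  nilpotent : ∀ h ∈ t, ∃ n : ℕ, ∀ x ∈ t, ((adE C h) ^ n) x = 0
  self_normalizing : ∀ x ∈ C.grade (0, 0), (∀ h ∈ t, C.bracket h x ∈ t) → x ∈ t

/-- The generalized root space `g_α`. -/
noncomputable def genRootSpace (C : ColorLie L) (t : Submodule ℂ L)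
    (α : Module.Dual ℂ t) : Submodule ℂ L :=
  ⨅ h : t, (adE C h.1).maxGenEigenspace (α h)

/-- The (proper) root space `g_α = {x | [h,x] = α(h)x ∀ h ∈ t}`. -/
noncomputable def rootSpace (C : ColorLie L) (t : Submodule ℂ L)
    (α : Module.Dual ℂ t) : Submodule ℂ L :=
  ⨅ h : t, (adE C h.1).eigenspace (α h)

/-- `α` is a (generalized) root. -/
def IsRoot (C : ColorLie L) (t : Submodule ℂ L) (α : Module.Dual ℂ t) : Prop :=
  α ≠ 0 ∧ genRootSpace C t α ≠ ⊥

/-- A representation of the color Lie algebra `g` on `V`. -/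
def IsRep (C : ColorLie L) {V : Type} [AddCommGroup V] [Module ℂ V]
    (φ : L →ₗ[ℂ] Module.End ℂ V) : Prop :=
  ∀ a b : Z22, ∀ x ∈ C.grade a, ∀ y ∈ C.grade b,
    φ (C.bracket x y) = φ x * φ y - sgn a b • (φ y * φ x)

/-!
Since `Ω` is linear in the image of `g` and `g` is the sum of its homogeneous components, it is
enough to commute `Ω` with a homogeneous `Y ∈ g^c`. Writing `[Y, Zᵢ] = Σⱼ aᵢⱼ Zⱼ` with
`aᵢⱼ = K([Y,Zᵢ],Zⱼ)` (orthonormality), the defining relations of `U(g)` give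
`[Y, Ω] = Σᵢⱼ (aᵢⱼ + (-1)^{ε(c,dⱼ)} aⱼᵢ) ZⱼZᵢ`, and each coefficient vanishes by the graded
invariance of `K`. Invariance itself comes from cyclicity of the trace: `K([Y,u],v)` and
`K([Y,v],u)` are combinations of `tr(ad Y ad u ad v)` and `tr(ad Y ad v ad u)`, and the latter
vanishes unless `c + deg u + deg v = 0`, because `ad Y ad v ad u` then shifts the grading.
-/

lemma sgn_mul_self (a b : Z22) : sgn a b * sgn a b = 1 := by
  unfold sgn; split <;> norm_num

lemma sgn_eq_sgn_of_add_add_eq_zero {c a b : Z22} (h : c + a + b = 0) : sgn c a = sgn c b := by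
  have : eps c a = eps c b := by revert h; revert c a b; decide
  rw [sgn, sgn, this]

section Algebra

variable {R A : Type} [CommRing R] [Ring A] [Algebra R A]

lemma mul_mul_self_sub_mul_self_mul {s : R} (hs : s * s = 1) {y z w : A}
    (hw : w = y * z - s • (z * y)) :
    y * (z * z) - z * z * y = w * z + s • (z * w) := by
  rw [hw]
  simp only [sub_mul, mul_sub, smul_sub, smul_mul_assoc, mul_smul_comm, smul_smul, hs, one_smul,
    mul_assoc]
  abel

lemma sum_mul_add_smul_mul_eq_zero {ι : Type} [Fintype ι] (z w : ι → A) (a : ι → ι → R)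
    (s : ι → R) (hw : ∀ i, w i = ∑ j, a i j • z j) (ha : ∀ i j, a i j + s j * a j i = 0) :
    ∑ i, (w i * z i + s i • (z i * w i)) = 0 := by
  have expand : ∑ i, (w i * z i + s i • (z i * w i)) =
      ∑ i, ∑ j, (a i j + s j * a j i) • (z j * z i) := by
    simp only [hw, Finset.sum_mul, Finset.mul_sum, Finset.smul_sum, smul_mul_assoc,
      mul_smul_comm, smul_smul, add_smul, Finset.sum_add_distrib]
    rw [Finset.sum_comm (f := fun i j => (s i * a i j) • (z i * z j))]
  simp only [expand, ha, zero_smul, Finset.sum_const_zero]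

end Algebra

section ColorLie

variable (C : ColorLie L)

lemma adE_bracket {a b : Z22} {x y : L} (hx : x ∈ C.grade a) (hy : y ∈ C.grade b) :
    adE C (C.bracket x y) = adE C x * adE C y - sgn a b • (adE C y * adE C x) := by
  ext z
  simp only [adE, LinearMap.sub_apply, LinearMap.smul_apply, Module.End.mul_apply,
    C.jacobi a b x hx y hy z]
  abel

lemma killing_eq_trace_adE_mul (x y : L) :
    killing C x y = LinearMap.trace ℂ L (adE C x * adE C y) := rfl

noncomputable def killingLeft (y : L) : L →ₗ[ℂ] ℂ :=
  LinearMap.trace ℂ L ∘ₗ LinearMap.lcomp ℂ L (C.bracket y) ∘ₗ C.bracket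

lemma killingLeft_apply (x y : L) : killingLeft C y x = killing C x y := rfl

lemma eq_sum_killing_smul_of_orthonormal {ι : Type} [Fintype ι] [DecidableEq ι]
    (Z : Module.Basis ι ℂ L) (horth : ∀ i j, killing C (Z i) (Z j) = if i = j then 1 else 0)
    (v : L) : v = ∑ j, killing C v (Z j) • Z j := by
  have hcoord : ∀ j, killingLeft C (Z j) = Z.coord j := fun j =>
    Z.ext fun i => by simp [killingLeft_apply, horth, Finsupp.single_apply]
  simp_rw [← killingLeft_apply, hcoord, Module.Basis.coord_apply, Z.sum_repr]

variable [FiniteDimensional ℂ L]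

lemma trace_eq_zero_of_mapsTo_grade_add {g : Z22} (hg : g ≠ 0) {f : Module.End ℂ L}
    (hf : ∀ e, Set.MapsTo f (C.grade e) (C.grade (g + e))) : LinearMap.trace ℂ L f = 0 :=
  LinearMap.trace_eq_zero_of_mapsTo_ne C.direct (g + ·) (fun e h => hg (by simpa using h)) hf

lemma trace_adE_mul_adE_mul_adE_eq_zero {a b c : Z22} {x y z : L} (hx : x ∈ C.grade a)
    (hy : y ∈ C.grade b) (hz : z ∈ C.grade c) (habc : a + b + c ≠ 0) :
    LinearMap.trace ℂ L (adE C x * adE C y * adE C z) = 0 := by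
  refine trace_eq_zero_of_mapsTo_grade_add C habc fun e w hw => ?_
  have := C.bracket_grade _ _ x hx _ <| C.bracket_grade _ _ y hy _ <|
    C.bracket_grade _ _ z hz w hw
  rwa [show a + (b + (c + e)) = a + b + c + e by abel] at this

lemma killing_bracket_add_sgn_mul_killing_bracket {a b c : Z22} {X u v : L}
    (hX : X ∈ C.grade c) (hu : u ∈ C.grade a) (hv : v ∈ C.grade b) :
    killing C (C.bracket X u) v + sgn c b * killing C (C.bracket X v) u = 0 := by
  set T₁ := LinearMap.trace ℂ L (adE C X * adE C u * adE C v)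
  set T₂ := LinearMap.trace ℂ L (adE C X * adE C v * adE C u)
  have cyclic : ∀ (p q r : Module.End ℂ L), LinearMap.trace ℂ L (q * p * r) =
      LinearMap.trace ℂ L (p * r * q) := fun p q r => by
    rw [mul_assoc, LinearMap.trace_mul_comm, mul_assoc]
  have hXu : killing C (C.bracket X u) v = T₁ - sgn c a * T₂ := by
    rw [killing_eq_trace_adE_mul, adE_bracket C hX hu, sub_mul, smul_mul_assoc, map_sub,
      map_smul, cyclic (adE C X) (adE C u), smul_eq_mul]
  have hXv : killing C (C.bracket X v) u = T₂ - sgn c b * T₁ := by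
    rw [killing_eq_trace_adE_mul, adE_bracket C hX hv, sub_mul, smul_mul_assoc, map_sub,
      map_smul, cyclic (adE C X) (adE C v), smul_eq_mul]
  have hs := sgn_mul_self c b
  rw [hXu, hXv]
  rcases eq_or_ne (c + a + b) 0 with h | h
  · rw [sgn_eq_sgn_of_add_add_eq_zero h]
    linear_combination (-T₁) * hs
  · have hT₂ : T₂ = 0 :=
      trace_adE_mul_adE_mul_adE_eq_zero C hX hv hu (by rwa [add_right_comm])
    rw [hT₂]
    linear_combination (-T₁) * hs

lemma mul_sum_mul_self_eq_sum_mul_self_mul_of_mem_grade {ι : Type} [Fintype ι] [DecidableEq ι]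
    (Z : Module.Basis ι ℂ L) (d : ι → Z22) (hZ : ∀ i, Z i ∈ C.grade (d i))
    (horth : ∀ i j, killing C (Z i) (Z j) = if i = j then 1 else 0)
    {A : Type} [Ring A] [Algebra ℂ A] (φ : L →ₗ[ℂ] A)
    (hrel : ∀ a b : Z22, ∀ x ∈ C.grade a, ∀ y ∈ C.grade b,
      φ (C.bracket x y) = φ x * φ y - sgn a b • (φ y * φ x))
    {c : Z22} {Y : L} (hY : Y ∈ C.grade c) :
    φ Y * (∑ i, φ (Z i) * φ (Z i)) = (∑ i, φ (Z i) * φ (Z i)) * φ Y := by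
  rw [← sub_eq_zero, Finset.mul_sum, Finset.sum_mul, ← Finset.sum_sub_distrib]
  have hcomm : ∀ i, φ Y * (φ (Z i) * φ (Z i)) - φ (Z i) * φ (Z i) * φ Y =
      φ (C.bracket Y (Z i)) * φ (Z i) + sgn c (d i) • (φ (Z i) * φ (C.bracket Y (Z i))) :=
    fun i => mul_mul_self_sub_mul_self_mul (sgn_mul_self c (d i))
      (hrel c (d i) Y hY (Z i) (hZ i))
  simp_rw [hcomm]
  refine sum_mul_add_smul_mul_eq_zero _ _ (fun i j => killing C (C.bracket Y (Z i)) (Z j))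
    _ (fun i => ?_) fun i j => killing_bracket_add_sgn_mul_killing_bracket C hY (hZ i) (hZ j)
  conv_lhs => rw [eq_sum_killing_smul_of_orthonormal C Z horth (C.bracket Y (Z i))]
  simp only [map_sum, map_smul]

end ColorLie

theorem stmt15_general [FiniteDimensional ℂ L] (C : ColorLie L)
    {ι : Type} [Fintype ι] [DecidableEq ι] (Z : Module.Basis ι ℂ L) (d : ι → Z22)
    (hZ : ∀ i, Z i ∈ C.grade (d i))
    (horth : ∀ i j, killing C (Z i) (Z j) = if i = j then 1 else 0)
    {A : Type} [Ring A] [Algebra ℂ A] (φ : L →ₗ[ℂ] A)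
    (hrel : ∀ a b : Z22, ∀ x ∈ C.grade a, ∀ y ∈ C.grade b,
      φ (C.bracket x y) = φ x * φ y - sgn a b • (φ y * φ x)) :
    ∀ X : L, φ X * (∑ i, φ (Z i) * φ (Z i)) = (∑ i, φ (Z i) * φ (Z i)) * φ X := by
  intro X
  have hX : X ∈ ⨆ e, C.grade e := by
    rw [C.direct.submodule_iSup_eq_top]; trivial
  refine Submodule.iSup_induction C.grade (motive := fun x => φ x * _ = _ * φ x) hX
    (fun c Y hY => mul_sum_mul_self_eq_sum_mul_self_mul_of_mem_grade C Z d hZ horth φ hrel hY)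
    (by simp) fun x y hx hy => ?_
  rw [map_add, add_mul, mul_add, hx, hy]

/-- The Casimir element `Ω = Σᵢ Zᵢ²` built from a homogeneous `K`-orthonormal basis
is central in the universal enveloping algebra: in any associative algebra `A`
together with a linear map `φ : g → A` satisfying the defining relations of `U(g)`
(in particular in `U(g)` itself), `φ(X)` commutes with `Σᵢ φ(Zᵢ)²` for all `X ∈ g`. -/
theorem stmt15 [FiniteDimensional ℂ L] (C : ColorLie L)
    (hnd : IsKillingNondeg C) (hred : IsReductive0 C)
    {ι : Type} [Fintype ι] [DecidableEq ι] (Z : Module.Basis ι ℂ L) (d : ι → Z22)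
    (hZ : ∀ i, Z i ∈ C.grade (d i))
    (horth : ∀ i j, killing C (Z i) (Z j) = if i = j then 1 else 0)
    {A : Type} [Ring A] [Algebra ℂ A] (φ : L →ₗ[ℂ] A)
    (hrel : ∀ a b : Z22, ∀ x ∈ C.grade a, ∀ y ∈ C.grade b,
      φ (C.bracket x y) = φ x * φ y - sgn a b • (φ y * φ x)) :
    ∀ X : L, φ X * (∑ i, φ (Z i) * φ (Z i)) = (∑ i, φ (Z i) * φ (Z i)) * φ X :=
  stmt15_general C Z d hZ horth φ hrel
end

section
/- Let g be a basic simple Z₂×Z₂-graded Lie algebra with self-centralizing Cartan subalgebra t and Weyl group W generated by the reflections s_α(β) = β − 2(⟨β,α⟩/⟨α,α⟩)α for α ∈ Δ. Then W permutes the root system Δ: for all α, β ∈ Δ, s_α(β) ∈ Δ. -/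
variable {L : Type} [AddCommGroup L] [Module ℂ L]

/-!
The cocycle `σ(a,b) = (-1)^{a₂b₁}` on `ℤ₂×ℤ₂` satisfies `σ(a,b) = (-1)^{ε(a,b)} σ(b,a)`, so
rescaling the bracket on `g_a × g_b` by `σ(a,b)` (Scheunert's discolouration) turns `g` into an
ordinary Lie algebra on the same space. The rescaling is trivial as soon as one argument lies in
`g^{(0,0)}`, so `t` is still a Cartan subalgebra acting by the same operators, and the root spaces
do not change. The new Killing form is `K(θx, y)`, where the involution `θ` acts on `g_a` by
`σ(a,a) = ±1`, so it is still nondegenerate. The reflection of a root along another in a Lie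
algebra with nondegenerate Killing form (`LieAlgebra.IsKilling.reflectRoot`, proved by the
`sl₂`-string argument), read through the identification of `t` with its dual by the Killing form,
is exactly `s_α(β)`.
-/

lemma LinearEquiv.trace_conjAlgEquiv {R M N : Type*} [CommRing R] [AddCommGroup M] [Module R M]
    [AddCommGroup N] [Module R N] (e : M ≃ₗ[R] N) (f : Module.End R M) :
    LinearMap.trace R N (e.conjAlgEquiv R f) = LinearMap.trace R M f := by
  rw [LinearEquiv.conjAlgEquiv_apply, ← LinearMap.comp_assoc, ← LinearEquiv.conj_apply,
    LinearMap.trace_conj']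

namespace ColorLie

noncomputable def signOf (x : ZMod 2) : ℂ := if x = 0 then 1 else -1

lemma signOf_add (x y : ZMod 2) : signOf (x + y) = signOf x * signOf y := by
  obtain rfl | rfl : x = 0 ∨ x = 1 := by decide +revert
  all_goals obtain rfl | rfl : y = 0 ∨ y = 1 := by decide +revert
  all_goals simp [signOf, CharTwo.add_self_eq_zero]

lemma signOf_mul_self (x : ZMod 2) : signOf x * signOf x = 1 := by
  rw [← signOf_add, CharTwo.add_self_eq_zero, signOf, if_pos rfl]

lemma sgn_eq_signOf (a b : Z22) : sgn a b = signOf (eps a b) := rfl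

noncomputable def cocycle (a b : Z22) : ℂ := signOf (a.2 * b.1)

lemma cocycle_zero_left (b : Z22) : cocycle 0 b = 1 := by simp [cocycle, signOf]

lemma cocycle_zero_right (a : Z22) : cocycle a 0 = 1 := by simp [cocycle, signOf]

lemma cocycle_mul_sgn (a b : Z22) : cocycle a b * sgn a b = cocycle b a := by
  rw [sgn_eq_signOf]
  simp only [cocycle, ← signOf_add, eps]
  ring_nf

lemma cocycle_mul_cocycle_add (a b c : Z22) :
    cocycle b c * cocycle a (b + c) = cocycle a b * cocycle (a + b) c := by
  simp only [cocycle, ← signOf_add, Prod.fst_add, Prod.snd_add]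
  ring_nf

lemma cocycle_mul_cocycle_add_mul_sgn (a b c : Z22) :
    cocycle b c * cocycle a (b + c) * sgn a b = cocycle a c * cocycle b (a + c) := by
  rw [sgn_eq_signOf]
  simp only [cocycle, ← signOf_add, eps, Prod.fst_add]
  ring_nf

lemma cocycle_mul_cocycle_add_self (a c : Z22) :
    cocycle a c * cocycle a (a + c) = cocycle a a := by
  simp only [cocycle, ← signOf_add, Prod.fst_add]
  congr 1
  calc a.2 * c.1 + a.2 * (a.1 + c.1) = a.2 * a.1 + (a.2 * c.1 + a.2 * c.1) := by ring
    _ = a.2 * a.1 := by rw [CharTwo.add_self_eq_zero, add_zero]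

variable (C : ColorLie L)

noncomputable def proj (a : Z22) : L →ₗ[ℂ] L :=
  (C.grade a).subtype ∘ₗ DirectSum.component ℂ Z22 (fun b => C.grade b) a ∘ₗ
    (LinearEquiv.ofBijective (DirectSum.coeLinearMap C.grade) C.direct).symm.toLinearMap

variable {C}

lemma proj_of_mem {a : Z22} {x : L} (hx : x ∈ C.grade a) : C.proj a x = x := by
  simp [proj, ← DirectSum.apply_eq_component, C.direct.ofBijective_coeLinearMap_of_mem hx]

lemma proj_of_mem_ne {a b : Z22} (hab : a ≠ b) {x : L} (hx : x ∈ C.grade a) :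
    C.proj b x = 0 := by
  simp [proj, ← DirectSum.apply_eq_component, C.direct.ofBijective_coeLinearMap_of_mem_ne hab hx]

lemma proj_mem (a : Z22) (x : L) : C.proj a x ∈ C.grade a := by
  simp [proj]

@[elab_as_elim]
lemma induction_on {motive : L → Prop} (x : L) (zero : motive 0)
    (add : ∀ x y, motive x → motive y → motive (x + y))
    (mem : ∀ a, ∀ x ∈ C.grade a, motive x) : motive x :=
  Submodule.iSup_induction (motive := motive) C.grade
    (C.direct.submodule_iSup_eq_top ▸ Submodule.mem_top) mem zero add

variable (C) in
lemma sum_proj (x : L) : ∑ a, C.proj a x = x := by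
  induction x using C.induction_on with
  | zero => simp
  | add x y hx hy => simp only [map_add, Finset.sum_add_distrib, hx, hy]
  | mem b x hx =>
    rw [Finset.sum_eq_single b (fun a _ hab => proj_of_mem_ne (Ne.symm hab) hx) (by simp),
      proj_of_mem hx]

variable (C) in
noncomputable def discoloredBracket : L →ₗ[ℂ] L →ₗ[ℂ] L :=
  ∑ a, ∑ b, cocycle a b • C.bracket.compl₁₂ (C.proj a) (C.proj b)

lemma discoloredBracket_apply (x y : L) :
    C.discoloredBracket x y =
      ∑ a, ∑ b, cocycle a b • C.bracket (C.proj a x) (C.proj b y) := by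
  simp [discoloredBracket, LinearMap.sum_apply]

lemma discoloredBracket_of_mem {a b : Z22} {x y : L} (hx : x ∈ C.grade a)
    (hy : y ∈ C.grade b) : C.discoloredBracket x y = cocycle a b • C.bracket x y := by
  rw [discoloredBracket_apply,
    Finset.sum_eq_single a (fun a' _ h => by simp [proj_of_mem_ne (Ne.symm h) hx]) (by simp),
    Finset.sum_eq_single b (fun b' _ h => by simp [proj_of_mem_ne (Ne.symm h) hy]) (by simp),
    proj_of_mem hx, proj_of_mem hy]

lemma discoloredBracket_mem {a b : Z22} {x y : L} (hx : x ∈ C.grade a) (hy : y ∈ C.grade b) :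
    C.discoloredBracket x y ∈ C.grade (a + b) := by
  rw [discoloredBracket_of_mem hx hy]
  exact Submodule.smul_mem _ _ (C.bracket_grade a b x hx y hy)

lemma discoloredBracket_of_mem_zero_left {x : L} (hx : x ∈ C.grade 0) (y : L) :
    C.discoloredBracket x y = C.bracket x y := by
  induction y using C.induction_on with
  | zero => simp
  | add y y' hy hy' => simp only [map_add, hy, hy']
  | mem b y hy => rw [discoloredBracket_of_mem hx hy, cocycle_zero_left, one_smul]

lemma discoloredBracket_of_mem_zero_right {y : L} (hy : y ∈ C.grade 0) (x : L) :
    C.discoloredBracket x y = C.bracket x y := by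
  induction x using C.induction_on with
  | zero => simp
  | add x x' hx hx' => simp only [map_add, LinearMap.add_apply, hx, hx']
  | mem a x hx => rw [discoloredBracket_of_mem hx hy, cocycle_zero_right, one_smul]

lemma discoloredBracket_swap (x y : L) :
    C.discoloredBracket x y = -C.discoloredBracket y x := by
  induction x using C.induction_on with
  | zero => simp
  | add x x' hx hx' => simp only [map_add, LinearMap.add_apply, hx, hx', neg_add]
  | mem a x hx =>
    induction y using C.induction_on with
    | zero => simp
    | add y y' hy hy' => simp only [map_add, LinearMap.add_apply, hy, hy', neg_add]
    | mem b y hy =>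
      rw [discoloredBracket_of_mem hx hy, discoloredBracket_of_mem hy hx,
        C.antisymm a b x hx y hy, neg_smul, smul_neg, smul_smul, cocycle_mul_sgn]

lemma discoloredBracket_leibniz_of_mem {a b c : Z22} {x y z : L}
    (hx : x ∈ C.grade a) (hy : y ∈ C.grade b) (hz : z ∈ C.grade c) :
    C.discoloredBracket x (C.discoloredBracket y z) =
      C.discoloredBracket (C.discoloredBracket x y) z +
        C.discoloredBracket y (C.discoloredBracket x z) := by
  have h₁ : C.discoloredBracket x (C.discoloredBracket y z) =
      (cocycle b c * cocycle a (b + c)) • C.bracket x (C.bracket y z) := by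
    rw [discoloredBracket_of_mem hy hz, map_smul,
      discoloredBracket_of_mem hx (C.bracket_grade b c y hy z hz), smul_smul]
  have h₂ : C.discoloredBracket (C.discoloredBracket x y) z =
      (cocycle a b * cocycle (a + b) c) • C.bracket (C.bracket x y) z := by
    rw [discoloredBracket_of_mem hx hy, LinearMap.map_smul₂,
      discoloredBracket_of_mem (C.bracket_grade a b x hx y hy) hz, smul_smul]
  have h₃ : C.discoloredBracket y (C.discoloredBracket x z) =
      (cocycle a c * cocycle b (a + c)) • C.bracket y (C.bracket x z) := by
    rw [discoloredBracket_of_mem hx hz, map_smul,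
      discoloredBracket_of_mem hy (C.bracket_grade a c x hx z hz), smul_smul, mul_comm]
  rw [h₁, h₂, h₃, C.jacobi a b x hx y hy z, smul_add, smul_smul,
    cocycle_mul_cocycle_add_mul_sgn, cocycle_mul_cocycle_add]

lemma discoloredBracket_leibniz (x y z : L) :
    C.discoloredBracket x (C.discoloredBracket y z) =
      C.discoloredBracket (C.discoloredBracket x y) z +
        C.discoloredBracket y (C.discoloredBracket x z) := by
  induction x using C.induction_on with
  | zero => simp
  | add x x' hx hx' => simp only [map_add, LinearMap.add_apply, hx, hx']; abel
  | mem a x hx =>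
    induction y using C.induction_on with
    | zero => simp
    | add y y' hy hy' => simp only [map_add, LinearMap.add_apply, hy, hy']; abel
    | mem b y hy =>
      induction z using C.induction_on with
      | zero => simp
      | add z z' hz hz' => simp only [map_add, hz, hz']; abel
      | mem c z hz => exact discoloredBracket_leibniz_of_mem hx hy hz

variable (C) in
def Discolored (_ : ColorLie L) : Type := L

instance : AddCommGroup C.Discolored := inferInstanceAs (AddCommGroup L)

instance : Module ℂ C.Discolored := inferInstanceAs (Module ℂ L)

instance [FiniteDimensional ℂ L] : FiniteDimensional ℂ C.Discolored :=
  inferInstanceAs (FiniteDimensional ℂ L)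

noncomputable instance : LieRing C.Discolored where
  bracket x y := C.discoloredBracket x y
  add_lie x y z := LinearMap.map_add₂ C.discoloredBracket x y z
  lie_add x y z := map_add (C.discoloredBracket x) y z
  lie_self x := by
    have h : (2 : ℂ) • C.discoloredBracket x x = 0 := by
      rw [two_smul]
      nth_rewrite 2 [discoloredBracket_swap (C := C) x x]
      exact add_neg_cancel _
    exact (smul_eq_zero.mp h).resolve_left two_ne_zero
  leibniz_lie x y z := discoloredBracket_leibniz (C := C) x y z

noncomputable instance : LieAlgebra ℂ C.Discolored where
  lie_smul c x y := map_smul (C.discoloredBracket x) c y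

variable (C) in
def toDiscolored : L ≃ₗ[ℂ] C.Discolored := LinearEquiv.refl ℂ L

lemma toDiscolored_symm_lie (x y : C.Discolored) :
    C.toDiscolored.symm ⁅x, y⁆ =
      C.discoloredBracket (C.toDiscolored.symm x) (C.toDiscolored.symm y) :=
  rfl

lemma toEnd_toDiscolored (x : L) :
    LieModule.toEnd ℂ C.Discolored C.Discolored (C.toDiscolored x) =
      C.toDiscolored.conjAlgEquiv ℂ (C.discoloredBracket x) :=
  rfl

variable (C) in
noncomputable def gradeSign : L →ₗ[ℂ] L := ∑ a, cocycle a a • C.proj a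

lemma gradeSign_of_mem {a : Z22} {x : L} (hx : x ∈ C.grade a) :
    C.gradeSign x = cocycle a a • x := by
  simp only [gradeSign, LinearMap.sum_apply, LinearMap.smul_apply]
  rw [Finset.sum_eq_single a (fun b _ h => by rw [proj_of_mem_ne (Ne.symm h) hx, smul_zero])
    (by simp), proj_of_mem hx]

lemma gradeSign_gradeSign (x : L) : C.gradeSign (C.gradeSign x) = x := by
  induction x using C.induction_on with
  | zero => simp
  | add x y hx hy => simp only [map_add, hx, hy]
  | mem a x hx =>
    rw [gradeSign_of_mem hx, map_smul, gradeSign_of_mem hx, smul_smul, cocycle, signOf_mul_self,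
      one_smul]

lemma killing_symm (x y : L) : killing C x y = killing C y x :=
  LinearMap.trace_mul_comm ℂ (C.bracket x) (C.bracket y)

lemma killing_add_left (x x' y : L) : killing C (x + x') y = killing C x y + killing C x' y := by
  simp only [killing, map_add, LinearMap.add_comp]

lemma killing_add_right (x y y' : L) : killing C x (y + y') = killing C x y + killing C x y' := by
  simp only [killing, map_add, LinearMap.comp_add]

lemma trace_eq_zero_of_mapsTo_grade_add [FiniteDimensional ℂ L] {d : Z22} (hd : d ≠ 0)
    {f : Module.End ℂ L} (hf : ∀ c, ∀ z ∈ C.grade c, f z ∈ C.grade (d + c)) :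
    LinearMap.trace ℂ L f = 0 :=
  LinearMap.trace_eq_zero_of_mapsTo_ne C.direct (d + ·) (by simpa using hd)
    fun c z hz => hf c z hz

lemma discoloredBracket_comp_of_mem {a : Z22} {x y : L} (hx : x ∈ C.grade a)
    (hy : y ∈ C.grade a) :
    C.discoloredBracket x ∘ₗ C.discoloredBracket y =
      cocycle a a • (C.bracket x ∘ₗ C.bracket y) := by
  ext z
  simp only [LinearMap.comp_apply, LinearMap.smul_apply]
  induction z using C.induction_on with
  | zero => simp
  | add z z' hz hz' => simp only [map_add, smul_add, hz, hz']
  | mem c z hz =>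
    rw [discoloredBracket_of_mem hy hz, map_smul,
      discoloredBracket_of_mem hx (C.bracket_grade a c y hy z hz), smul_smul,
      cocycle_mul_cocycle_add_self]

lemma killingForm_toDiscolored_of_mem [FiniteDimensional ℂ L] {a b : Z22} {x y : L}
    (hx : x ∈ C.grade a) (hy : y ∈ C.grade b) :
    killingForm ℂ C.Discolored (C.toDiscolored x) (C.toDiscolored y) =
      cocycle a a * killing C x y := by
  rw [LieModule.traceForm_apply_apply, toEnd_toDiscolored, toEnd_toDiscolored,
    ← Module.End.mul_eq_comp, ← map_mul, LinearEquiv.trace_conjAlgEquiv, killing,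
    Module.End.mul_eq_comp]
  obtain rfl | hab := eq_or_ne a b
  · rw [discoloredBracket_comp_of_mem hx hy, map_smul, smul_eq_mul]
  have hd : a + b ≠ 0 := fun h => hab ((by decide : ∀ a b : Z22, a + b = 0 → a = b) a b h)
  rw [trace_eq_zero_of_mapsTo_grade_add (C := C) hd fun c z hz => ?_,
    trace_eq_zero_of_mapsTo_grade_add (C := C) hd fun c z hz => ?_, mul_zero]
  · simpa [add_assoc] using C.bracket_grade _ _ x hx _ (C.bracket_grade _ _ y hy z hz)
  · simpa [add_assoc] using discoloredBracket_mem hx (discoloredBracket_mem hy hz)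

lemma killingForm_toDiscolored [FiniteDimensional ℂ L] (x y : L) :
    killingForm ℂ C.Discolored (C.toDiscolored x) (C.toDiscolored y) =
      killing C (C.gradeSign x) y := by
  induction x using C.induction_on with
  | zero => simp [killing]
  | add x x' hx hx' =>
    rw [map_add, map_add, LinearMap.add_apply, hx, hx', map_add, killing_add_left]
  | mem a x hx =>
    induction y using C.induction_on with
    | zero => simp [killing]
    | add y y' hy hy' => rw [map_add, map_add, hy, hy', killing_add_right]
    | mem b y hy =>
      rw [killingForm_toDiscolored_of_mem hx hy, gradeSign_of_mem hx, killing, killing,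
        map_smul, LinearMap.smul_comp, map_smul, smul_eq_mul]

theorem isKilling_discolored [FiniteDimensional ℂ L] (hnd : IsKillingNondeg C) :
    LieAlgebra.IsKilling ℂ C.Discolored := by
  refine ⟨(LieSubmodule.eq_bot_iff _).mpr fun x hx => ?_⟩
  rw [LieIdeal.mem_killingCompl] at hx
  rw [← C.toDiscolored.apply_symm_apply x, LinearEquiv.map_eq_zero_iff]
  refine hnd _ fun z => ?_
  rw [killing_symm, ← gradeSign_gradeSign (C := C) z, ← killingForm_toDiscolored,
    LinearEquiv.apply_symm_apply]
  exact hx _ (LieSubmodule.mem_top _)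

lemma proj_bracket_of_mem_zero {h : L} (hh : h ∈ C.grade 0) (a : Z22) (x : L) :
    C.proj a (C.bracket x h) = C.bracket (C.proj a x) h := by
  induction x using C.induction_on with
  | zero => simp
  | add x y hx hy => simp only [map_add, LinearMap.add_apply, hx, hy]
  | mem b x hx =>
    have hxh : C.bracket x h ∈ C.grade b := by simpa using C.bracket_grade b 0 x hx h hh
    obtain rfl | hab := eq_or_ne b a
    · rw [proj_of_mem hx, proj_of_mem hxh]
    · rw [proj_of_mem_ne hab hx, proj_of_mem_ne hab hxh, map_zero, LinearMap.zero_apply]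

section Cartan

variable {t : Submodule ℂ L}

lemma mem_of_forall_bracket_mem (hC : IsCartan C t)
    (hself : ∀ x : L, (∀ h ∈ t, C.bracket x h = 0) ↔ x ∈ t)
    {x : L} (hx : ∀ h ∈ t, C.bracket x h ∈ t) : x ∈ t := by
  have hproj : ∀ a ≠ 0, C.proj a x = 0 := by
    intro a ha
    have hmem : C.proj a x ∈ t := (hself _).mp fun h hh => by
      rw [← proj_bracket_of_mem_zero (hC.le hh), proj_of_mem_ne (Ne.symm ha) (hC.le (hx h hh))]
    rw [← proj_of_mem (proj_mem a x), proj_of_mem_ne (Ne.symm ha) (hC.le hmem)]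
  have hx₀ : x ∈ C.grade (0, 0) := by
    rw [← C.sum_proj x, Finset.sum_eq_single 0 (fun a _ ha => hproj a ha) (by simp)]
    exact proj_mem 0 x
  refine hC.self_normalizing x hx₀ fun h hh => ?_
  have hsgn : sgn (0, 0) (0, 0) = 1 := by simp [sgn, eps]
  rw [C.antisymm _ _ h (hC.le hh) x hx₀, hsgn, neg_one_smul]
  exact neg_mem (hx h hh)

noncomputable def cartan (hC : IsCartan C t) : LieSubalgebra ℂ C.Discolored where
  toSubmodule := t.map (C.toDiscolored : L →ₗ[ℂ] C.Discolored)
  lie_mem' {x y} hx hy := by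
    change x ∈ t.map (C.toDiscolored : L →ₗ[ℂ] C.Discolored) at hx
    change y ∈ t.map (C.toDiscolored : L →ₗ[ℂ] C.Discolored) at hy
    change ⁅x, y⁆ ∈ t.map (C.toDiscolored : L →ₗ[ℂ] C.Discolored)
    rw [Submodule.mem_map_equiv] at hx hy ⊢
    rw [toDiscolored_symm_lie, discoloredBracket_of_mem_zero_left (hC.le hx)]
    exact hC.bracket_mem _ hx _ hy

lemma mem_cartan (hC : IsCartan C t) {x : C.Discolored} :
    x ∈ cartan hC ↔ C.toDiscolored.symm x ∈ t :=
  Submodule.mem_map_equiv t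

def cartanEquiv (hC : IsCartan C t) : t ≃ₗ[ℂ] cartan hC := C.toDiscolored.submoduleMap t

lemma toEnd_cartanEquiv (hC : IsCartan C t) (h : t) :
    LieModule.toEnd ℂ (cartan hC) C.Discolored (cartanEquiv hC h) =
      C.toDiscolored.conjAlgEquiv ℂ (adE C h) := by
  ext y
  change C.discoloredBracket h y = C.bracket h y
  exact discoloredBracket_of_mem_zero_left (hC.le h.2) y

lemma isLieAbelian_cartan (hC : IsCartan C t)
    (hself : ∀ x : L, (∀ h ∈ t, C.bracket x h = 0) ↔ x ∈ t) :
    IsLieAbelian (cartan hC) := by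
  refine ⟨fun x y => Subtype.ext ?_⟩
  have hx := (mem_cartan hC).mp x.2
  rw [LieSubalgebra.coe_bracket, ZeroMemClass.coe_zero, ← C.toDiscolored.symm.map_eq_zero_iff,
    toDiscolored_symm_lie, discoloredBracket_of_mem_zero_left (hC.le hx)]
  exact (hself _).mpr hx _ ((mem_cartan hC).mp y.2)

lemma isCartanSubalgebra_cartan (hC : IsCartan C t)
    (hself : ∀ x : L, (∀ h ∈ t, C.bracket x h = 0) ↔ x ∈ t) :
    (cartan hC).IsCartanSubalgebra := by
  have := isLieAbelian_cartan hC hself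
  refine ⟨inferInstance, le_antisymm (fun x hx => ?_) (LieSubalgebra.le_normalizer _)⟩
  rw [LieSubalgebra.mem_normalizer_iff] at hx
  refine (mem_cartan hC).mpr (mem_of_forall_bracket_mem hC hself fun h hh => ?_)
  have hh' : C.toDiscolored h ∈ cartan hC := by
    rwa [mem_cartan, LinearEquiv.symm_apply_apply]
  have := (mem_cartan hC).mp (hx _ hh')
  rwa [toDiscolored_symm_lie, LinearEquiv.symm_apply_apply,
    discoloredBracket_of_mem_zero_right (hC.le hh)] at this

lemma genWeightSpace_cartan (hC : IsCartan C t) [LieRing.IsNilpotent (cartan hC)]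
    (δ : Module.Dual ℂ t) :
    (LieModule.genWeightSpace C.Discolored (δ ∘ₗ (cartanEquiv hC).symm.toLinearMap) :
        Submodule ℂ C.Discolored) =
      (genRootSpace C t δ).map (C.toDiscolored : L →ₗ[ℂ] C.Discolored) := by
  ext m
  rw [LieSubmodule.mem_toSubmodule, LieModule.mem_genWeightSpace, Submodule.mem_map_equiv,
    genRootSpace, Submodule.mem_iInf, ← (cartanEquiv hC).toEquiv.forall_congr_right]
  refine forall_congr' fun h => ?_
  rw [Module.End.mem_maxGenEigenspace, LinearEquiv.coe_toEquiv, LinearMap.comp_apply,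
    LinearEquiv.coe_coe, LinearEquiv.symm_apply_apply, toEnd_cartanEquiv,
    ← map_one (C.toDiscolored.conjAlgEquiv ℂ), ← map_smul, ← map_sub]
  simp_rw [← map_pow, LinearEquiv.conjAlgEquiv_apply, LinearMap.comp_apply, LinearEquiv.coe_coe,
    LinearEquiv.map_eq_zero_iff]

lemma isRoot_iff_exists_weight (hC : IsCartan C t) [LieRing.IsNilpotent (cartan hC)]
    (δ : Module.Dual ℂ t) :
    IsRoot C t δ ↔ ∃ χ : LieModule.Weight ℂ (cartan hC) C.Discolored,
      χ.IsNonZero ∧ ∀ h : t, χ (cartanEquiv hC h) = δ h := by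
  have hspace : genRootSpace C t δ ≠ ⊥ ↔ LieModule.genWeightSpace C.Discolored
      (δ ∘ₗ (cartanEquiv hC).symm.toLinearMap) ≠ ⊥ := by
    rw [ne_eq, ne_eq, ← LieSubmodule.toSubmodule_eq_bot, genWeightSpace_cartan,
      Submodule.map_eq_bot_iff]
  have hfun {χ : cartan hC → ℂ} (hχ : ∀ h : t, χ (cartanEquiv hC h) = δ h) :
      χ = ⇑(δ ∘ₗ (cartanEquiv hC).symm.toLinearMap) := by
    ext y
    rw [← (cartanEquiv hC).apply_symm_apply y, hχ]
    simp
  constructor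
  · rintro ⟨hδ, hne⟩
    refine ⟨⟨δ ∘ₗ (cartanEquiv hC).symm.toLinearMap, hspace.mp hne⟩, fun h0 => hδ ?_,
      fun h => by simp⟩
    ext h
    simpa using congrFun h0 (cartanEquiv hC h)
  · rintro ⟨χ, hχ0, hχ⟩
    refine ⟨fun hδ => hχ0 ?_, hspace.mpr (hfun hχ ▸ χ.genWeightSpace_ne_bot)⟩
    rw [LieModule.Weight.IsZero, hfun hχ, hδ, LinearMap.zero_comp]
    rfl

lemma traceForm_cartanEquiv [FiniteDimensional ℂ L] (hC : IsCartan C t) (h h' : t) :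
    LieModule.traceForm ℂ (cartan hC) C.Discolored (cartanEquiv hC h) (cartanEquiv hC h') =
      killing C h h' := by
  rw [LieModule.traceForm_apply_apply, toEnd_cartanEquiv, toEnd_cartanEquiv,
    ← Module.End.mul_eq_comp, ← map_mul, LinearEquiv.trace_conjAlgEquiv, killing,
    Module.End.mul_eq_comp]
  rfl

lemma weight_apply_coroot [FiniteDimensional ℂ L] (hC : IsCartan C t)
    [LieAlgebra.IsKilling ℂ C.Discolored] [(cartan hC).IsCartanSubalgebra]
    {χ ψ : LieModule.Weight ℂ (cartan hC) C.Discolored} {α β : Module.Dual ℂ t}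
    (hχ : ∀ h : t, χ (cartanEquiv hC h) = α h) (hψ : ∀ h : t, ψ (cartanEquiv hC h) = β h)
    {u : t} (hu : ∀ h : t, α h = killing C u h) :
    ψ (LieAlgebra.IsKilling.coroot χ) = 2 * β u / α u := by
  have hdual :
      (LieAlgebra.IsKilling.cartanEquivDual (cartan hC)).symm χ = cartanEquiv hC u := by
    rw [LinearEquiv.symm_apply_eq]
    ext y
    rw [LieAlgebra.IsKilling.cartanEquivDual_apply_apply, Module.End.mul_eq_comp,
      ← LieModule.traceForm_apply_apply, ← (cartanEquiv hC).apply_symm_apply y,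
      traceForm_cartanEquiv, LieModule.Weight.toLinear_apply, hχ, hu]
  rw [LieAlgebra.IsKilling.coroot, hdual, map_nsmul, map_smul, hχ, hψ, smul_eq_mul, nsmul_eq_mul]
  ring

end Cartan

end ColorLie

open ColorLie LieAlgebra.IsKilling in
theorem stmt18_general [FiniteDimensional ℂ L] (C : ColorLie L)
    (hnd : IsKillingNondeg C)
    (t : Submodule ℂ L) (hC : IsCartan C t)
    (hself : ∀ x : L, (∀ h ∈ t, C.bracket x h = 0) ↔ x ∈ t)
    (H : Module.Dual ℂ t → t)
    (hH : ∀ γ : Module.Dual ℂ t, ∀ x : t, γ x = killing C (H γ).1 x.1)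
    (α β : Module.Dual ℂ t) (hα : IsRoot C t α) (hβ : IsRoot C t β) :
    IsRoot C t
      (β - (2 * killing C (H β).1 (H α).1 / killing C (H α).1 (H α).1) • α) := by
  have := isKilling_discolored hnd
  have := isCartanSubalgebra_cartan hC hself
  obtain ⟨χ, -, hχ⟩ := (isRoot_iff_exists_weight hC α).mp hα
  obtain ⟨ψ, hψ₀, hψ⟩ := (isRoot_iff_exists_weight hC β).mp hβ
  refine (isRoot_iff_exists_weight hC _).mpr
    ⟨reflectRoot χ ψ, reflectRoot_isNonZero χ ψ hψ₀, fun h => ?_⟩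
  rw [← hH β (H α), ← hH α (H α)]
  simp [reflectRoot, hχ, hψ, weight_apply_coroot hC hχ hψ (hH α)]

/-- The Weyl group permutes the roots: for roots `α, β`,
`s_α(β) = β − 2(⟨β,α⟩/⟨α,α⟩)α` is again a root. -/
theorem stmt18 [FiniteDimensional ℂ L] (C : ColorLie L)
    (hs : C.IsSimple) (hnd : IsKillingNondeg C) (hred : IsReductive0 C)
    (t : Submodule ℂ L) (hC : IsCartan C t)
    (hself : ∀ x : L, (∀ h ∈ t, C.bracket x h = 0) ↔ x ∈ t)
    (H : Module.Dual ℂ t → t)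
    (hH : ∀ γ : Module.Dual ℂ t, ∀ x : t, γ x = killing C (H γ).1 x.1)
    (α β : Module.Dual ℂ t) (hα : IsRoot C t α) (hβ : IsRoot C t β) :
    IsRoot C t
      (β - (2 * killing C (H β).1 (H α).1 / killing C (H α).1 (H α).1) • α) :=
  stmt18_general C hnd t hC hself H hH α β hα hβ
end
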